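/- For λ ≥ 0 and a point s_i with w · s_i < 0, the supremum over x ∈ R^n of (indicator of {w · x ≥ 0}) minus λ‖x - s_i‖₂ equals max(1 - λ·|w·s_i|/‖w‖₂, 0). -/

import Mathlib

/-!
On the half-space `0 ≤ ⟪w, x⟫` the objective is `1 - l‖x - s‖`, and by Cauchy–Schwarz every such
`x` lies at distance at least `c = |⟪w, s⟫| / ‖w‖` from `s`; the foot of the perpendicular from `s`
to the hyperplane `⟪w, x⟫ = 0` attains this distance. Off the half-space the objective is at most
`0`, attained at `x = s`.
-/

open scoped RealInnerProductSpace

section InnerProductSpace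

variable {E : Type*} [NormedAddCommGroup E] [InnerProductSpace ℝ E]

lemma neg_inner_div_norm_le_norm_sub {w x s : E} (hx : 0 ≤ ⟪w, x⟫) :
    -⟪w, s⟫ / ‖w‖ ≤ ‖x - s‖ := by
  refine div_le_of_le_mul₀ (norm_nonneg w) (norm_nonneg _) ?_
  calc -⟪w, s⟫ ≤ ⟪w, x - s⟫ := by rw [inner_sub_right]; linarith
    _ ≤ ‖w‖ * ‖x - s‖ := real_inner_le_norm w (x - s)
    _ = ‖x - s‖ * ‖w‖ := mul_comm _ _

lemma exists_inner_eq_zero_norm_sub_eq {w : E} (hw : w ≠ 0) (s : E) :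
    ∃ x, ⟪w, x⟫ = 0 ∧ ‖x - s‖ = |⟪w, s⟫| / ‖w‖ := by
  have hw' : ‖w‖ ≠ 0 := norm_ne_zero_iff.2 hw
  refine ⟨s - (⟪w, s⟫ / ‖w‖ ^ 2) • w, ?_, ?_⟩
  · rw [inner_sub_right, real_inner_smul_right, real_inner_self_eq_norm_sq]
    field_simp
    ring
  · rw [sub_sub_cancel_left, norm_neg, norm_smul, Real.norm_eq_abs, abs_div, abs_pow,
      abs_norm]
    field_simp

end InnerProductSpace

theorem psi_neg_case_general (n : ℕ) (w s : EuclideanSpace ℝ (Fin n)) (l : ℝ)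
    (hl : 0 ≤ l) (hs : ⟪w, s⟫ < 0) :
    (⨆ x : EuclideanSpace ℝ (Fin n),
        ((if 0 ≤ ⟪w, x⟫ then (1 : ℝ) else 0) - l * ‖x - s‖)) =
      max (1 - l * (|⟪w, s⟫| / ‖w‖)) 0 := by
  have hw : w ≠ 0 := by rintro rfl; simp at hs
  set f := fun x : EuclideanSpace ℝ (Fin n) =>
    (if 0 ≤ ⟪w, x⟫ then (1 : ℝ) else 0) - l * ‖x - s‖
  have hle : ∀ x, f x ≤ max (1 - l * (|⟪w, s⟫| / ‖w‖)) 0 := by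
    intro x
    by_cases hx : 0 ≤ ⟪w, x⟫
    · have hdist := neg_inner_div_norm_le_norm_sub (s := s) hx
      rw [← abs_of_neg hs] at hdist
      have := mul_le_mul_of_nonneg_left hdist hl
      exact le_max_of_le_left (by simp only [f, if_pos hx]; linarith)
    · have := mul_nonneg hl (norm_nonneg (x - s))
      exact le_max_of_le_right (by simp only [f, if_neg hx]; linarith)
  have hbdd : BddAbove (Set.range f) := ⟨_, Set.forall_mem_range.2 hle⟩
  obtain ⟨x₀, hx₀, hdist⟩ := exists_inner_eq_zero_norm_sub_eq hw s
  refine le_antisymm (ciSup_le hle) (max_le ?_ ?_)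
  · exact le_ciSup_of_le hbdd x₀ (by simp [f, hx₀, hdist])
  · exact le_ciSup_of_le hbdd s (by simp [f, not_le.2 hs])

theorem psi_neg_case (n : ℕ) (w s : EuclideanSpace ℝ (Fin n)) (l : ℝ)
    (hw : w ≠ 0) (hl : 0 ≤ l) (hs : ⟪w, s⟫ < 0) :
    (⨆ x : EuclideanSpace ℝ (Fin n),
        ((if 0 ≤ ⟪w, x⟫ then (1 : ℝ) else 0) - l * ‖x - s‖)) =
      max (1 - l * (|⟪w, s⟫| / ‖w‖)) 0 :=
  psi_neg_case_general n w s l hl hs
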